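/- arXiv:2109.00832 — 5 statements merged into one kernel-verified Lean document; each statement's English description precedes it below -/
import Mathlib

section
/- Let g, h ∈ L¹[0,1] with 0 ≤ h ≤ g pointwise, ‖g‖₁ ≤ 1, and ‖h‖₁ ≥ 1 − ε for some 0 < ε < 1/4. Let L = {t ∈ [0,1] : h(t) ≥ 2(g(t) − h(t))}. Then ∫_L g(t) dt ≥ 1 − 4ε. -/
open MeasureTheory

/-- If `0 ≤ h ≤ g` on `[0,1]`, `‖g‖₁ ≤ 1`, `‖h‖₁ ≥ 1 - ε` with `0 < ε < 1/4`, and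
`L = {t ∈ [0,1] : h t ≥ 2(g t - h t)}`, then `∫_L g ≥ 1 - 4ε`. -/
theorem integral_on_good_set_ge (g h : ℝ → ℝ) (ε : ℝ)
    (hε0 : 0 < ε) (hε : ε < 1 / 4)
    (hgm : Measurable g) (hhm : Measurable h)
    (hgint : IntegrableOn g (Set.Icc (0:ℝ) 1)) (hhint : IntegrableOn h (Set.Icc (0:ℝ) 1))
    (hh0 : ∀ t ∈ Set.Icc (0:ℝ) 1, 0 ≤ h t)
    (hhg : ∀ t ∈ Set.Icc (0:ℝ) 1, h t ≤ g t)
    (hg1 : ∫ t in Set.Icc (0:ℝ) 1, g t ≤ 1)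
    (hh1 : 1 - ε ≤ ∫ t in Set.Icc (0:ℝ) 1, h t) :
    1 - 4 * ε ≤ ∫ t in {t ∈ Set.Icc (0:ℝ) 1 | 2 * (g t - h t) ≤ h t}, g t := by
  set S : Set ℝ := Set.Icc (0:ℝ) 1 with hS
  have hSmeas : MeasurableSet S := measurableSet_Icc
  have hCmeas : MeasurableSet {t | 2 * (g t - h t) ≤ h t} := by
    apply measurableSet_le <;> fun_prop
  set L : Set ℝ := {t ∈ S | 2 * (g t - h t) ≤ h t} with hL
  have hLmeas : MeasurableSet L := hSmeas.inter hCmeas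
  set M : Set ℝ := S \ L with hM
  have hMmeas : MeasurableSet M := hSmeas.diff hLmeas
  have hMsub : M ⊆ S := Set.diff_subset
  have hLsub : L ⊆ S := Set.sep_subset _ _
  have hgintL : IntegrableOn g L := hgint.mono_set hLsub
  have hgintM : IntegrableOn g M := hgint.mono_set hMsub
  have hsplit : ∫ t in S, g t = (∫ t in L, g t) + ∫ t in M, g t := by
    rw [← setIntegral_union (Set.disjoint_sdiff_right) hMmeas hgintL hgintM,
      Set.union_diff_cancel hLsub]
  -- ∫_M g ≤ 3 ∫_M (g - h)
  have hstep1 : ∫ t in M, g t ≤ ∫ t in M, 3 * (g t - h t) := by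
    apply setIntegral_mono_on hgintM (IntegrableOn.mono_set ((hgint.sub hhint).const_mul 3) hMsub) hMmeas
    intro t ht
    have ht2 : ¬ 2 * (g t - h t) ≤ h t := fun hc => ht.2 ⟨ht.1, hc⟩
    push_neg at ht2
    simp only [Pi.sub_apply]
    nlinarith [hh0 t ht.1, hhg t ht.1]
  have hstep2 : ∫ t in M, 3 * (g t - h t) ≤ ∫ t in S, 3 * (g t - h t) := by
    apply setIntegral_mono_set ((hgint.sub hhint).const_mul 3)
    · filter_upwards [ae_restrict_mem hSmeas] with t ht
      simp only [Pi.zero_apply, Pi.sub_apply]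
      linarith [hhg t ht]
    · exact HasSubset.Subset.eventuallyLE hMsub
  have hdiff : ∫ t in S, 3 * (g t - h t) ≤ 3 * ε := by
    rw [integral_const_mul, integral_sub hgint hhint]
    nlinarith
  have hmono : ∫ t in S, h t ≤ ∫ t in S, g t :=
    setIntegral_mono_on hhint hgint hSmeas hhg
  linarith [hsplit, hstep1, hstep2, hdiff, hmono]
end

section
/- Let X be a Banach lattice, 0 < δ ≤ 1, and for each n let {y_σ : |σ| = n} be pairwise disjoint positive vectors indexed by binary strings of length n such that y_σ = y_{σ⌢0} + y_{σ⌢1} and δ ≤ ‖y_σ‖ ≤ 1 for all σ. Then for every n and scalars (a_σ)_{|σ|=n}, δ·max_{|σ|=n}|a_σ| ≤ ‖Σ_{|σ|=n} a_σ y_σ‖ ≤ max_{|σ|=n}|a_σ|, and consequently the closed sublattice generated by all y_σ is lattice isomorphic to C(Δ), where Δ is the Cantor set. -/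
/-- The Cantor space `Δ = 2^ℕ`. -/
abbrev Cantor : Type := ℕ → Bool

/-!
For pairwise disjoint positive vectors `u i` of a vector lattice, `|∑ a i • u i| = ∑ |a i| • u i`.
Together with the solidity of the norm this gives both norm estimates, and it makes each level-`n`
sum `f ↦ ∑ σ, f (x σ) • y σ` (with `x σ` a point of the cylinder `Δ σ`) a lattice homomorphism
on `C(Δ)`. Uniform continuity of `f` on the Cantor space makes these sums a Cauchy sequence in `n`;
the limit `T` is then a lattice homomorphism with `δ * ‖f‖ ≤ ‖T f‖` that maps the indicator of
`Δ σ` to `y σ`, so its range is closed and is the closed sublattice generated by the `y σ`.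
-/

open Filter Topology Uniformity

section LatticeOrderedGroup

variable {E : Type*} [Lattice E] [AddCommGroup E] [IsOrderedAddMonoid E] {a b c : E}

theorem inf_add_eq_zero (hab : a ⊓ b = 0) (hac : a ⊓ c = 0) : a ⊓ (b + c) = 0 := by
  have hb : 0 ≤ b := hab ▸ inf_le_right
  have hc : 0 ≤ c := hac ▸ inf_le_right
  have hle_c : a ⊓ (b + c) ≤ c := by
    rw [← sub_nonpos, ← hab]
    exact le_inf ((sub_le_self _ hc).trans inf_le_left) (sub_le_iff_le_add.2 inf_le_right)
  refine le_antisymm (hac ▸ le_inf inf_le_left hle_c) (le_inf ?_ (add_nonneg hb hc))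
  exact hab ▸ inf_le_left

theorem Finset.inf_sum_eq_zero {ι : Type*} {s : Finset ι} {f : ι → E} (ha : 0 ≤ a)
    (h : ∀ i ∈ s, a ⊓ f i = 0) : a ⊓ ∑ i ∈ s, f i = 0 :=
  Finset.sum_induction f (a ⊓ · = 0) (fun _ _ => inf_add_eq_zero) (inf_eq_right.2 ha) h

theorem abs_add_eq_add_abs_of_inf_eq_zero (h : |a| ⊓ |b| = 0) : |a + b| = |a| + |b| := by
  refine le_antisymm (abs_add_le a b) ?_
  calc |a| + |b| = |a| ⊔ |b| := by rw [← inf_add_sup |a| |b|, h, zero_add]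
    _ = |(|b| - |a|)| := by rw [← sup_sub_inf_eq_abs_sub, h, sub_zero]
    _ ≤ |b - -a| := by simpa only [abs_neg] using abs_abs_sub_abs_le b (-a)
    _ = |a + b| := by rw [sub_neg_eq_add, add_comm]

theorem map_inf_of_map_sup {F E' : Type*} [Lattice E'] [AddCommGroup E'] [IsOrderedAddMonoid E']
    [FunLike F E E'] [AddMonoidHomClass F E E'] (T : F) (h : ∀ a b, T (a ⊔ b) = T a ⊔ T b)
    (a b : E) : T (a ⊓ b) = T a ⊓ T b := by
  have := congrArg T (inf_add_sup a b)
  rw [map_add, map_add, h, ← inf_add_sup (T a) (T b)] at this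
  exact add_right_cancel this

end LatticeOrderedGroup

section VectorLattice

variable {E : Type*} [Lattice E] [AddCommGroup E] [IsOrderedAddMonoid E] [Module ℝ E]
  [PosSMulMono ℝ E]

theorem abs_smul_of_nonneg_right (c : ℝ) {x : E} (hx : 0 ≤ x) : |c • x| = |c| • x := by
  rcases le_total 0 c with hc | hc
  · rw [abs_of_nonneg (smul_nonneg hc hx), abs_of_nonneg hc]
  · rw [abs_of_nonpos (smul_nonpos_of_nonpos_of_nonneg hc hx), abs_of_nonpos hc, neg_smul]

theorem smul_inf_smul_eq_zero {u v : E} (huv : u ⊓ v = 0) {c d : ℝ} (hc : 0 ≤ c) (hd : 0 ≤ d) :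
    c • u ⊓ d • v = 0 := by
  have hu : 0 ≤ u := huv ▸ inf_le_left
  have hv : 0 ≤ v := huv ▸ inf_le_right
  have hk : 0 < c + d + 1 := by linarith
  have hscale : (c + d + 1) • u ⊓ (c + d + 1) • v = 0 := by
    have := (OrderIso.smulRight hk).map_inf u v
    simp only [OrderIso.smulRight_apply] at this
    rw [← this, huv, smul_zero]
  refine le_antisymm (hscale ▸ inf_le_inf ?_ ?_) (le_inf (smul_nonneg hc hu) (smul_nonneg hd hv))
  · exact smul_le_smul_of_nonneg_right (by linarith) hu
  · exact smul_le_smul_of_nonneg_right (by linarith) hv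

end VectorLattice

section NormedLattice

variable {X : Type*} [NormedAddCommGroup X] [Lattice X] [HasSolidNorm X] [IsOrderedAddMonoid X]
  [NormedSpace ℝ X]

theorem smul_nonneg_of_hasSolidNorm {c : ℝ} (hc : 0 ≤ c) {x : X} (hx : 0 ≤ x) : 0 ≤ c • x := by
  -- `0 ≤ 2 • z → 0 ≤ z` in a lattice-ordered group, so all dyadic multiples of `x` are positive;
  -- the positive cone is closed and contains their limits.
  have hdyadic : ∀ k : ℕ, 0 ≤ (1 / 2 ^ k : ℝ) • x := by
    intro k
    induction k with
    | zero => simpa using hx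
    | succ k ih =>
      refine nsmul_two_semiclosed ?_
      have htwo : ((2 : ℕ) : ℝ) * (1 / 2 ^ (k + 1)) = 1 / 2 ^ k := by push_cast; ring
      rwa [← Nat.cast_smul_eq_nsmul ℝ, smul_smul, htwo]
  have hlim : Tendsto (fun k : ℕ => (⌊c * 2 ^ k⌋₊ : ℝ) / 2 ^ k) atTop (𝓝 c) :=
    (tendsto_nat_floor_mul_div_atTop hc).comp
      (tendsto_pow_atTop_atTop_of_one_lt one_lt_two)
  refine isClosed_nonneg.mem_of_tendsto (hlim.smul_const x) (Eventually.of_forall fun k => ?_)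
  rw [div_eq_mul_one_div, ← smul_smul, Nat.cast_smul_eq_nsmul]
  exact nsmul_nonneg (hdyadic k) _

instance HasSolidNorm.toPosSMulMono : PosSMulMono ℝ X :=
  .of_smul_nonneg fun _ hc _ hx => smul_nonneg_of_hasSolidNorm hc hx

end NormedLattice

section DisjointFamily

variable {ι E : Type*} [Lattice E] [AddCommGroup E] [IsOrderedAddMonoid E] [Module ℝ E]
  [PosSMulMono ℝ E] {u : ι → E}

theorem abs_sum_smul_of_pairwise_inf_eq_zero (hu : ∀ i, 0 ≤ u i)
    (hdisj : Pairwise fun i j => u i ⊓ u j = 0) (s : Finset ι) (a : ι → ℝ) :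
    |∑ i ∈ s, a i • u i| = ∑ i ∈ s, |a i| • u i := by
  classical
  induction s using Finset.induction_on with
  | empty => simp
  | insert j s hj ih =>
    have hinf : |a j| • u j ⊓ ∑ i ∈ s, |a i| • u i = 0 :=
      Finset.inf_sum_eq_zero (smul_nonneg (abs_nonneg _) (hu j)) fun i hi =>
        smul_inf_smul_eq_zero (hdisj (ne_of_mem_of_not_mem hi hj).symm) (abs_nonneg _)
          (abs_nonneg _)
    rw [Finset.sum_insert hj, Finset.sum_insert hj, abs_add_eq_add_abs_of_inf_eq_zero] <;>
      rw [ih, abs_smul_of_nonneg_right _ (hu j)]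
    exact hinf

theorem sum_smul_sup_sum_smul (hu : ∀ i, 0 ≤ u i) (hdisj : Pairwise fun i j => u i ⊓ u j = 0)
    (s : Finset ι) (a b : ι → ℝ) :
    (∑ i ∈ s, a i • u i) ⊔ ∑ i ∈ s, b i • u i = ∑ i ∈ s, (a i ⊔ b i) • u i := by
  rw [sup_eq_half_smul_add_add_abs_sub' ℝ, ← Finset.sum_sub_distrib]
  simp_rw [← sub_smul]
  rw [abs_sum_smul_of_pairwise_inf_eq_zero hu hdisj, ← Finset.sum_add_distrib,
    ← Finset.sum_add_distrib, Finset.smul_sum]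
  refine Finset.sum_congr rfl fun i _ => ?_
  rw [← add_smul, ← add_smul, smul_smul, sup_eq_half_smul_add_add_abs_sub' ℝ (a i), smul_eq_mul]

end DisjointFamily

section NormedDisjointFamily

variable {ι X : Type*} [NormedAddCommGroup X] [Lattice X] [HasSolidNorm X] [IsOrderedAddMonoid X]
  [NormedSpace ℝ X] {u : ι → X}

theorem norm_smul_le_norm_sum_smul (hu : ∀ i, 0 ≤ u i) (hdisj : Pairwise fun i j => u i ⊓ u j = 0)
    {s : Finset ι} (a : ι → ℝ) {i : ι} (hi : i ∈ s) :
    ‖a i • u i‖ ≤ ‖∑ j ∈ s, a j • u j‖ := by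
  refine HasSolidNorm.solid ?_
  rw [abs_smul_of_nonneg_right _ (hu i), abs_sum_smul_of_pairwise_inf_eq_zero hu hdisj]
  exact Finset.single_le_sum (f := fun j => |a j| • u j)
    (fun j _ => smul_nonneg (abs_nonneg _) (hu j)) hi

theorem norm_sum_smul_le_mul_norm_sum (hu : ∀ i, 0 ≤ u i)
    (hdisj : Pairwise fun i j => u i ⊓ u j = 0) (s : Finset ι) {a : ι → ℝ} {C : ℝ} (hC0 : 0 ≤ C)
    (hC : ∀ i ∈ s, |a i| ≤ C) : ‖∑ i ∈ s, a i • u i‖ ≤ C * ‖∑ i ∈ s, u i‖ := by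
  have hsum : 0 ≤ ∑ i ∈ s, u i := Finset.sum_nonneg fun i _ => hu i
  calc ‖∑ i ∈ s, a i • u i‖ ≤ ‖C • ∑ i ∈ s, u i‖ := by
        refine HasSolidNorm.solid ?_
        rw [abs_sum_smul_of_pairwise_inf_eq_zero hu hdisj, abs_of_nonneg (smul_nonneg hC0 hsum),
          Finset.smul_sum]
        exact Finset.sum_le_sum fun i hi => smul_le_smul_of_nonneg_right (hC i hi) (hu i)
    _ = C * ‖∑ i ∈ s, u i‖ := by rw [norm_smul, Real.norm_of_nonneg hC0]

end NormedDisjointFamily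

theorem exists_continuousLinearMap_tendsto_of_cauchySeq {𝕜 E F : Type*}
    [NontriviallyNormedField 𝕜] [NormedAddCommGroup E] [NormedSpace 𝕜 E] [CompleteSpace E]
    [NormedAddCommGroup F] [NormedSpace 𝕜 F] [CompleteSpace F] (g : ℕ → E →L[𝕜] F)
    (hg : ∀ x, CauchySeq fun n => g n x) :
    ∃ T : E →L[𝕜] F, ∀ x, Tendsto (fun n => g n x) atTop (𝓝 (T x)) :=
  ⟨continuousLinearMapOfTendsto g (tendsto_pi_nhds.2 fun x => (hg x).tendsto_limUnder),
    fun x => (hg x).tendsto_limUnder⟩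

section DyadicSplitting

variable {R M : Type*} [Semiring R] [AddCommMonoid M] [Module R M]

def IsDyadicSplitting (y : ∀ n : ℕ, (Fin n → Bool) → M) : Prop :=
  ∀ n (σ : Fin n → Bool), y n σ = y (n + 1) (Fin.snoc σ false) + y (n + 1) (Fin.snoc σ true)

variable {y : ∀ n : ℕ, (Fin n → Bool) → M}

theorem IsDyadicSplitting.sum_smul_eq_sum_smul_init (hy : IsDyadicSplitting y) (n : ℕ)
    (a : (Fin n → Bool) → R) :
    ∑ σ, a σ • y n σ = ∑ τ : Fin (n + 1) → Bool, a (Fin.init τ) • y (n + 1) τ := by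
  rw [← (Fin.snocEquiv fun _ => Bool).sum_comp, Fintype.sum_prod_type, Fintype.sum_bool,
    ← Finset.sum_add_distrib]
  refine Finset.sum_congr rfl fun σ _ => ?_
  have hsnoc : ∀ b, Fin.snocEquiv (fun _ => Bool) (b, σ) = Fin.snoc σ b := fun _ => rfl
  rw [hsnoc, hsnoc, Fin.init_snoc, Fin.init_snoc, ← smul_add, add_comm, hy n σ]

theorem IsDyadicSplitting.sum_smul_eq_sum_smul_take (hy : IsDyadicSplitting y) {n m : ℕ}
    (h : n ≤ m) (a : (Fin n → Bool) → R) :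
    ∑ σ, a σ • y n σ = ∑ τ : Fin m → Bool, a (Fin.take n h τ) • y m τ := by
  induction m, h using Nat.le_induction with
  | base => simp [Fin.take_eq_self]
  | succ m _ ih => rw [ih, hy.sum_smul_eq_sum_smul_init]; simp [Fin.take_init]

theorem IsDyadicSplitting.sum_eq_root (hy : IsDyadicSplitting y) (n : ℕ) :
    ∑ σ, y n σ = y 0 Fin.elim0 := by
  have := hy.sum_smul_eq_sum_smul_take (R := ℕ) n.zero_le 1
  simp only [Pi.one_apply, one_smul, Fintype.sum_unique] at this
  rw [← this]
  exact congrArg (y 0) (Subsingleton.elim _ _)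

end DyadicSplitting

namespace Cantor

theorem exists_forall_abs_sub_lt (f : C(Cantor, ℝ)) {ε : ℝ} (hε : 0 < ε) :
    ∃ N, ∀ x z : Cantor, (∀ i < N, x i = z i) → |f x - f z| < ε := by
  have hU : 𝓤 Cantor = ⨅ i, 𝓟 {p : Cantor × Cantor | p.1 i = p.2 i} := by
    rw [Pi.uniformity]
    congr! with i
    rw [DiscreteUniformity.eq_principal_setRelId, comap_principal]
    rfl
  have hf := CompactSpace.uniformContinuous_of_continuous f.continuous
    (Metric.dist_mem_uniformity hε)
  rw [hU, mem_map, (hasBasis_iInf_principal_finite _).mem_iff] at hf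
  obtain ⟨t, ht, hsub⟩ := hf
  obtain ⟨N, hN⟩ := ht.bddAbove
  refine ⟨N + 1, fun x z hxz => ?_⟩
  have := @hsub (x, z) (Set.mem_iInter₂.2 fun i hi => hxz i (Nat.lt_succ_of_le (hN hi)))
  simpa [Real.dist_eq] using this

def pad {n : ℕ} (σ : Fin n → Bool) : Cantor := fun i => if h : i < n then σ ⟨i, h⟩ else false

def restrict (n : ℕ) (x : Cantor) : Fin n → Bool := fun i => x i

theorem pad_apply_of_lt {n : ℕ} (σ : Fin n → Bool) {i : ℕ} (hi : i < n) : pad σ i = σ ⟨i, hi⟩ :=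
  dif_pos hi

theorem restrict_pad {n m : ℕ} (h : n ≤ m) (τ : Fin m → Bool) :
    restrict n (pad τ) = Fin.take n h τ := by
  funext i
  exact pad_apply_of_lt τ (i.isLt.trans_le h)

theorem pad_take_apply_of_lt {n m : ℕ} (h : n ≤ m) (τ : Fin m → Bool) {i : ℕ} (hi : i < n) :
    pad (Fin.take n h τ) i = pad τ i := by
  rw [pad_apply_of_lt _ hi, pad_apply_of_lt _ (hi.trans_le h)]
  rfl

theorem tendsto_pad_restrict (x : Cantor) : Tendsto (fun n => pad (restrict n x)) atTop (𝓝 x) := by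
  refine tendsto_pi_nhds.2 fun i => tendsto_const_nhds.congr' ?_
  filter_upwards [eventually_gt_atTop i] with n hn
  exact (pad_apply_of_lt (restrict n x) hn).symm

def cylinderIndicator {n : ℕ} (σ : Fin n → Bool) : C(Cantor, ℝ) where
  toFun x := if restrict n x = σ then 1 else 0
  continuous_toFun := (continuous_of_discreteTopology
    (f := fun τ : Fin n → Bool => if τ = σ then (1 : ℝ) else 0)).comp
      (continuous_pi fun _ => continuous_apply _)

theorem cylinderIndicator_pad {n m : ℕ} (h : n ≤ m) (σ : Fin n → Bool) (τ : Fin m → Bool) :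
    cylinderIndicator σ (pad τ) = if Fin.take n h τ = σ then 1 else 0 := by
  rw [← restrict_pad h]
  rfl

end Cantor

structure IsDisjointDyadicTree {X : Type*} [Lattice X] [AddCommGroup X]
    (y : ∀ n : ℕ, (Fin n → Bool) → X) : Prop where
  nonneg : ∀ n σ, 0 ≤ y n σ
  pairwise_inf_eq_zero : ∀ n, Pairwise fun σ τ : Fin n → Bool => y n σ ⊓ y n τ = 0
  split : IsDyadicSplitting y

section TreeApprox

open Cantor

variable {X : Type*} [NormedAddCommGroup X] [NormedSpace ℝ X] {y : ∀ n : ℕ, (Fin n → Bool) → X}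

variable (y) in
noncomputable def treeApprox (n : ℕ) : C(Cantor, ℝ) →L[ℝ] X :=
  ∑ σ : Fin n → Bool, (ContinuousMap.evalCLM ℝ (pad σ)).smulRight (y n σ)

theorem treeApprox_apply (n : ℕ) (f : C(Cantor, ℝ)) :
    treeApprox y n f = ∑ σ, f (pad σ) • y n σ := by
  simp [treeApprox]

theorem IsDyadicSplitting.treeApprox_cylinderIndicator (hy : IsDyadicSplitting y) {n m : ℕ}
    (h : n ≤ m) (σ : Fin n → Bool) : treeApprox y m (cylinderIndicator σ) = y n σ := by
  simp_rw [treeApprox_apply, cylinderIndicator_pad h,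
    ← hy.sum_smul_eq_sum_smul_take h fun τ => if τ = σ then (1 : ℝ) else 0]
  simp

theorem IsDyadicSplitting.map_cylinderIndicator_of_tendsto (hy : IsDyadicSplitting y)
    {T : C(Cantor, ℝ) →L[ℝ] X} (hT : ∀ f, Tendsto (fun n => treeApprox y n f) atTop (𝓝 (T f)))
    {n : ℕ} (σ : Fin n → Bool) : T (cylinderIndicator σ) = y n σ :=
  tendsto_nhds_unique (hT _) <| tendsto_const_nhds.congr' <|
    (eventually_ge_atTop n).mono fun _ hm => (hy.treeApprox_cylinderIndicator hm σ).symm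

end TreeApprox

section DisjointDyadicTree

open Cantor

variable {X : Type*} [NormedAddCommGroup X] [Lattice X] [HasSolidNorm X] [IsOrderedAddMonoid X]
  [NormedSpace ℝ X] {y : ∀ n : ℕ, (Fin n → Bool) → X}

namespace IsDisjointDyadicTree

theorem norm_sum_smul_le (hy : IsDisjointDyadicTree y) (hroot : ‖y 0 Fin.elim0‖ ≤ 1) (n : ℕ)
    {a : (Fin n → Bool) → ℝ} {C : ℝ} (hC0 : 0 ≤ C) (hC : ∀ σ, |a σ| ≤ C) :
    ‖∑ σ, a σ • y n σ‖ ≤ C := by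
  calc ‖∑ σ, a σ • y n σ‖ ≤ C * ‖∑ σ, y n σ‖ :=
        norm_sum_smul_le_mul_norm_sum (hy.nonneg n) (hy.pairwise_inf_eq_zero n) _ hC0
          fun σ _ => hC σ
    _ ≤ C := by
        rw [hy.split.sum_eq_root]
        exact mul_le_of_le_one_right hC0 hroot

theorem mul_abs_le_norm_sum_smul (hy : IsDisjointDyadicTree y) {n : ℕ} {δ : ℝ}
    {τ : Fin n → Bool} (hδ : δ ≤ ‖y n τ‖) (a : (Fin n → Bool) → ℝ) :
    δ * |a τ| ≤ ‖∑ σ, a σ • y n σ‖ :=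
  calc δ * |a τ| ≤ ‖y n τ‖ * |a τ| := mul_le_mul_of_nonneg_right hδ (abs_nonneg _)
    _ = ‖a τ • y n τ‖ := by rw [norm_smul, Real.norm_eq_abs, mul_comm]
    _ ≤ ‖∑ σ, a σ • y n σ‖ :=
        norm_smul_le_norm_sum_smul (hy.nonneg n) (hy.pairwise_inf_eq_zero n) a
          (Finset.mem_univ τ)

theorem cauchySeq_treeApprox (hy : IsDisjointDyadicTree y) (hroot : ‖y 0 Fin.elim0‖ ≤ 1)
    (f : C(Cantor, ℝ)) : CauchySeq fun n => treeApprox y n f := by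
  refine Metric.cauchySeq_iff'.2 fun ε hε => ?_
  obtain ⟨N, hN⟩ := Cantor.exists_forall_abs_sub_lt f (half_pos hε)
  refine ⟨N, fun n hn => ?_⟩
  have hdiff : treeApprox y n f - treeApprox y N f =
      ∑ τ : Fin n → Bool, (f (pad τ) - f (pad (Fin.take N hn τ))) • y n τ := by
    simp_rw [treeApprox_apply, hy.split.sum_smul_eq_sum_smul_take hn fun σ => f (pad σ),
      ← Finset.sum_sub_distrib, sub_smul]
  rw [dist_eq_norm, hdiff]
  refine (hy.norm_sum_smul_le hroot n (half_pos hε).le fun τ => (hN _ _ fun i hi => ?_).le).trans_lt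
    (half_lt_self hε)
  exact (pad_take_apply_of_lt hn τ hi).symm

theorem treeApprox_sup (hy : IsDisjointDyadicTree y) (n : ℕ) (f g : C(Cantor, ℝ)) :
    treeApprox y n (f ⊔ g) = treeApprox y n f ⊔ treeApprox y n g := by
  simp only [treeApprox_apply,
    sum_smul_sup_sum_smul (hy.nonneg n) (hy.pairwise_inf_eq_zero n)]
  rfl

variable {T : C(Cantor, ℝ) →L[ℝ] X}

theorem map_sup_of_tendsto (hy : IsDisjointDyadicTree y)
    (hT : ∀ f, Tendsto (fun n => treeApprox y n f) atTop (𝓝 (T f))) (f g : C(Cantor, ℝ)) :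
    T (f ⊔ g) = T f ⊔ T g :=
  tendsto_nhds_unique (hT (f ⊔ g)) <|
    ((hT f).sup_nhds (hT g)).congr fun n => (hy.treeApprox_sup n f g).symm

theorem mul_norm_le_norm_of_tendsto (hy : IsDisjointDyadicTree y)
    (hT : ∀ f, Tendsto (fun n => treeApprox y n f) atTop (𝓝 (T f))) {δ : ℝ} (hδ0 : 0 ≤ δ)
    (hδ : ∀ n σ, δ ≤ ‖y n σ‖) (f : C(Cantor, ℝ)) : δ * ‖f‖ ≤ ‖T f‖ := by
  rw [ContinuousMap.norm_eq_iSup_norm, Real.mul_iSup_of_nonneg hδ0]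
  refine ciSup_le fun x => le_of_tendsto_of_tendsto' (f := fun n => δ * ‖f (pad (restrict n x))‖)
    ?_ (hT f).norm fun n => ?_
  · exact ((f.continuous.tendsto x).comp (tendsto_pad_restrict x)).norm.const_mul δ
  · rw [treeApprox_apply, Real.norm_eq_abs]
    exact hy.mul_abs_le_norm_sum_smul (hδ n (restrict n x)) fun σ => f (pad σ)

end IsDisjointDyadicTree

end DisjointDyadicTree

section ClosedSublattice

open Cantor

variable {X : Type*} [NormedAddCommGroup X] [Lattice X] [IsOrderedAddMonoid X] [NormedSpace ℝ X]
  {y : ∀ n : ℕ, (Fin n → Bool) → X}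

theorem range_eq_sInf_of_tendsto_treeApprox {T : C(Cantor, ℝ) →L[ℝ] X} (hy : IsDyadicSplitting y)
    (hT : ∀ f, Tendsto (fun n => treeApprox y n f) atTop (𝓝 (T f)))
    (hsup : ∀ f g, T (f ⊔ g) = T f ⊔ T g) {c : ℝ} (hc : 0 < c)
    (hbelow : ∀ f, c * ‖f‖ ≤ ‖T f‖) :
    LinearMap.range (T : C(Cantor, ℝ) →ₗ[ℝ] X) =
      sInf {S : Submodule ℝ X | IsClosed (S : Set X) ∧
        (∀ a ∈ S, ∀ b ∈ S, a ⊔ b ∈ S ∧ a ⊓ b ∈ S) ∧ ∀ n σ, y n σ ∈ S} := by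
  refine le_antisymm (fun x hx => ?_) (sInf_le ⟨?_, ?_, ?_⟩)
  · obtain ⟨f, rfl⟩ := LinearMap.mem_range.1 hx
    refine Submodule.mem_sInf.2 fun S ⟨hclosed, _, hyS⟩ =>
      hclosed.mem_of_tendsto (hT f) (Eventually.of_forall fun n => ?_)
    rw [SetLike.mem_coe, treeApprox_apply]
    exact Submodule.sum_mem S fun σ _ => S.smul_mem _ (hyS n σ)
  · have hanti : AntilipschitzWith (c⁻¹).toNNReal T := T.antilipschitz_of_bound fun f => by
      rw [Real.coe_toNNReal _ (inv_nonneg.2 hc.le), ← div_eq_inv_mul, le_div_iff₀' hc]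
      exact hbelow f
    rw [LinearMap.coe_range]
    exact hanti.isClosed_range T.uniformContinuous
  · rintro _ ⟨f, rfl⟩ _ ⟨g, rfl⟩
    exact ⟨⟨f ⊔ g, hsup f g⟩, ⟨f ⊓ g, map_inf_of_map_sup T hsup f g⟩⟩
  · exact fun n σ => ⟨cylinderIndicator σ, hy.map_cylinderIndicator_of_tendsto hT σ⟩

end ClosedSublattice

theorem dyadic_tree_gives_C_Delta_general
    (X : Type) [NormedAddCommGroup X] [Lattice X] [HasSolidNorm X]
      [IsOrderedAddMonoid X] [NormedSpace ℝ X] [CompleteSpace X]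
    (δ : ℝ) (hδ0 : 0 < δ)
    (y : ∀ n : ℕ, (Fin n → Bool) → X)
    (hpos : ∀ n σ, 0 ≤ y n σ)
    (hdisj : ∀ n (σ τ : Fin n → Bool), σ ≠ τ → y n σ ⊓ y n τ = 0)
    (hsplit : ∀ n (σ : Fin n → Bool),
      y n σ = y (n + 1) (Fin.snoc σ false) + y (n + 1) (Fin.snoc σ true))
    (hnorm : ∀ n σ, δ ≤ ‖y n σ‖ ∧ ‖y n σ‖ ≤ 1) :
    (∀ n (a : (Fin n → Bool) → ℝ),
      δ * (⨆ σ, |a σ|) ≤ ‖∑ σ : Fin n → Bool, a σ • y n σ‖ ∧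
      ‖∑ σ : Fin n → Bool, a σ • y n σ‖ ≤ ⨆ σ, |a σ|) ∧
    ∃ T : C(Cantor, ℝ) →L[ℝ] X,
      (∀ f g : C(Cantor, ℝ), T (f ⊔ g) = T f ⊔ T g) ∧
      (∃ c : ℝ, 0 < c ∧ ∀ f : C(Cantor, ℝ), c * ‖f‖ ≤ ‖T f‖) ∧
      LinearMap.range (T : C(Cantor, ℝ) →ₗ[ℝ] X) =
        sInf {S : Submodule ℝ X | IsClosed (S : Set X) ∧
          (∀ a ∈ S, ∀ b ∈ S, a ⊔ b ∈ S ∧ a ⊓ b ∈ S) ∧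
          ∀ n σ, y n σ ∈ S} := by
  have hy : IsDisjointDyadicTree y := ⟨hpos, hdisj, hsplit⟩
  have hroot : ‖y 0 Fin.elim0‖ ≤ 1 := (hnorm 0 Fin.elim0).2
  have hlow : ∀ n σ, δ ≤ ‖y n σ‖ := fun n σ => (hnorm n σ).1
  refine ⟨fun n a => ⟨?_, ?_⟩, ?_⟩
  · rw [Real.mul_iSup_of_nonneg hδ0.le]
    exact ciSup_le fun τ => hy.mul_abs_le_norm_sum_smul (hlow n τ) a
  · exact hy.norm_sum_smul_le hroot n (Real.iSup_nonneg fun σ => abs_nonneg _)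
      fun σ => le_ciSup (f := fun σ => |a σ|) (Set.finite_range _).bddAbove σ
  obtain ⟨T, hT⟩ :=
    exists_continuousLinearMap_tendsto_of_cauchySeq _ (hy.cauchySeq_treeApprox hroot)
  have hsup := hy.map_sup_of_tendsto hT
  have hbelow := hy.mul_norm_le_norm_of_tendsto hT hδ0.le hlow
  exact ⟨T, hsup, ⟨δ, hδ0, hbelow⟩, range_eq_sInf_of_tendsto_treeApprox hsplit hT hsup hδ0 hbelow⟩

/-- Let `X` be a Banach lattice, `0 < δ ≤ 1`, and `(y σ)` a dyadic tree of pairwise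
disjoint positive vectors with `y σ = y (σ⌢0) + y (σ⌢1)` and `δ ≤ ‖y σ‖ ≤ 1`. Then
`δ · max |a_σ| ≤ ‖Σ a_σ y_σ‖ ≤ max |a_σ|` for all scalars, and the closed sublattice
of `X` generated by all the `y σ` is lattice isomorphic to `C(Δ)`. -/
theorem dyadic_tree_gives_C_Delta
    (X : Type) [NormedAddCommGroup X] [Lattice X] [HasSolidNorm X]
      [IsOrderedAddMonoid X] [NormedSpace ℝ X] [CompleteSpace X]
    (δ : ℝ) (hδ0 : 0 < δ) (hδ1 : δ ≤ 1)
    (y : ∀ n : ℕ, (Fin n → Bool) → X)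
    (hpos : ∀ n σ, 0 ≤ y n σ)
    (hdisj : ∀ n (σ τ : Fin n → Bool), σ ≠ τ → y n σ ⊓ y n τ = 0)
    (hsplit : ∀ n (σ : Fin n → Bool),
      y n σ = y (n + 1) (Fin.snoc σ false) + y (n + 1) (Fin.snoc σ true))
    (hnorm : ∀ n σ, δ ≤ ‖y n σ‖ ∧ ‖y n σ‖ ≤ 1) :
    (∀ n (a : (Fin n → Bool) → ℝ),
      δ * (⨆ σ, |a σ|) ≤ ‖∑ σ : Fin n → Bool, a σ • y n σ‖ ∧
      ‖∑ σ : Fin n → Bool, a σ • y n σ‖ ≤ ⨆ σ, |a σ|) ∧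
    ∃ T : C(Cantor, ℝ) →L[ℝ] X,
      (∀ f g : C(Cantor, ℝ), T (f ⊔ g) = T f ⊔ T g) ∧
      (∃ c : ℝ, 0 < c ∧ ∀ f : C(Cantor, ℝ), c * ‖f‖ ≤ ‖T f‖) ∧
      LinearMap.range (T : C(Cantor, ℝ) →ₗ[ℝ] X) =
        sInf {S : Submodule ℝ X | IsClosed (S : Set X) ∧
          (∀ a ∈ S, ∀ b ∈ S, a ⊔ b ∈ S ∧ a ⊓ b ∈ S) ∧
          ∀ n σ, y n σ ∈ S} :=
  dyadic_tree_gives_C_Delta_general X δ hδ0 y hpos hdisj hsplit hnorm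
end

section
/- C(Δ) is not lattice embeddable into C[0,1], where Δ is the Cantor space (even though C(Δ) is linearly isomorphic to C[0,1] by Miljutin's theorem). -/
/-!
For a lattice homomorphism `T : C(Δ) → C(Y)` and a coordinate `i`, the images of the indicators
of `{z i = true}` and `{z i = false}` are disjoint and add up to `T 1`, so on a connected set where
`T 1 > 0` one of them vanishes identically. If `Y` is compact and locally connected and `T` is
bounded below by `c`, finitely many components of `{T 1 > 0}` cover `{T 1 ≥ c}`. Choosing the
`k`-th coordinate of a cylinder in the half killed on the `k`-th component (a diagonal choice)
gives a function of norm one whose image stays below `c`.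
-/

open Set

section LatticeHom

variable {α β F : Type*} [FunLike F α β]

theorem monotone_of_map_sup [SemilatticeSup α] [SemilatticeSup β] {T : F}
    (hT : ∀ f g, T (f ⊔ g) = T f ⊔ T g) : Monotone T := fun f g hfg => by
  rw [← sup_eq_right.2 hfg, hT]
  exact le_sup_left

theorem map_inf_of_map_sup_s11 [Lattice α] [AddCommGroup α] [AddLeftMono α] [Lattice β]
    [AddCommGroup β] [AddLeftMono β] [AddMonoidHomClass F α β] {T : F}
    (hT : ∀ f g, T (f ⊔ g) = T f ⊔ T g) (f g : α) : T (f ⊓ g) = T f ⊓ T g := by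
  have h := congrArg T (inf_add_sup f g)
  rw [map_add, map_add, hT, ← inf_add_sup (T f) (T g)] at h
  exact add_right_cancel h

end LatticeHom

section ClopenIndicator

variable {X : Type*} [TopologicalSpace X] {s t : Set X}

noncomputable def clopenIndicator (hs : IsClopen s) : C(X, ℝ) :=
  (LocallyConstant.charFn ℝ hs).toContinuousMap

theorem coe_clopenIndicator (hs : IsClopen s) : ⇑(clopenIndicator hs) = s.indicator 1 := rfl

theorem clopenIndicator_nonneg (hs : IsClopen s) : 0 ≤ clopenIndicator hs :=
  fun _ => Set.indicator_nonneg (fun _ _ => zero_le_one) _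

theorem clopenIndicator_le_one (hs : IsClopen s) : clopenIndicator hs ≤ 1 :=
  fun _ => Set.indicator_le_self' (fun _ _ => zero_le_one) _

theorem clopenIndicator_mono (hs : IsClopen s) (ht : IsClopen t) (hst : s ⊆ t) :
    clopenIndicator hs ≤ clopenIndicator ht :=
  fun _ => Set.indicator_le_indicator_of_subset hst (fun _ => zero_le_one) _

theorem clopenIndicator_inf_eq_zero (hs : IsClopen s) (ht : IsClopen t) (hst : Disjoint s t) :
    clopenIndicator hs ⊓ clopenIndicator ht = 0 := by
  ext x
  simp only [ContinuousMap.inf_apply, coe_clopenIndicator, ContinuousMap.zero_apply]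
  by_cases hxs : x ∈ s
  · simp [hxs, hst.notMem_of_mem_left hxs]
  · by_cases hxt : x ∈ t <;> simp [hxs, hxt]

theorem clopenIndicator_add_eq_one (hs : IsClopen s) (ht : IsClopen t) (hst : IsCompl s t) :
    clopenIndicator hs + clopenIndicator ht = 1 := by
  ext x
  rw [ContinuousMap.add_apply, coe_clopenIndicator, coe_clopenIndicator, ← hst.compl_eq,
    Set.indicator_self_add_compl_apply]
  rfl

theorem norm_clopenIndicator [CompactSpace X] (hs : IsClopen s) (hne : s.Nonempty) :
    ‖clopenIndicator hs‖ = 1 := by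
  obtain ⟨x, hx⟩ := hne
  refine le_antisymm ((ContinuousMap.norm_le _ zero_le_one).2 fun y => ?_) ?_
  · rw [coe_clopenIndicator, Real.norm_eq_abs]
    by_cases hy : y ∈ s <;> simp [hy]
  · simpa [coe_clopenIndicator, hx] using (clopenIndicator hs).norm_coe_le_norm x

end ClopenIndicator

theorem isClopen_cylinder {E : ℕ → Type*} [∀ n, TopologicalSpace (E n)]
    [∀ n, DiscreteTopology (E n)] (x : ∀ n, E n) (n : ℕ) : IsClopen (PiNat.cylinder x n) := by
  refine ⟨?_, PiNat.isOpen_cylinder E x n⟩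
  rw [PiNat.cylinder_eq_pi]
  exact isClosed_set_pi fun _ _ => isClosed_discrete _

theorem Cantor.isClopen_coord (i : ℕ) (b : Bool) : IsClopen {z : Cantor | z i = b} :=
  (isClopen_discrete {b}).preimage (continuous_apply i)

theorem Cantor.isCompl_coord (i : ℕ) : IsCompl {z : Cantor | z i = true} {z | z i = false} := by
  constructor
  · exact Set.disjoint_left.2 fun z h1 h2 => by simp_all
  · rw [codisjoint_iff]
    ext z
    cases h : z i <;> simp [h]

theorem Finset.exists_diagonal_agree {α : Type*} [Nonempty α] (s : Finset (ℕ → α)) :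
    ∃ (x : ℕ → α) (n : ℕ), ∀ d ∈ s, ∃ i < n, x i = d i := by
  classical
  let e := s.equivFin
  refine ⟨fun i => if hi : i < s.card then (e.symm ⟨i, hi⟩ : ℕ → α) i
    else Classical.arbitrary α, s.card, fun d hd => ⟨e ⟨d, hd⟩, (e ⟨d, hd⟩).2, ?_⟩⟩
  simp

theorem IsPreconnected.eqOn_zero_or_eqOn_zero {Y : Type*} [TopologicalSpace Y] {u v : C(Y, ℝ)}
    (huv : u ⊓ v = 0) {S : Set Y} (hS : IsPreconnected S) (hpos : ∀ y ∈ S, 0 < u y + v y) :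
    EqOn u 0 S ∨ EqOn v 0 S := by
  have hmin (y : Y) : min (u y) (v y) = 0 := by simpa using congr($huv y)
  have hzero {a b : ℝ} (hab : min a b = 0) (hb : 0 < b) : a = 0 := by
    rcases min_choice a b with h | h <;> linarith
  have hcover : S ⊆ {y | 0 < v y} ∪ {y | 0 < u y} := fun y hy =>
    (lt_or_ge 0 (v y)).imp id fun hv => show 0 < u y by linarith [hpos y hy]
  have hdisj : Disjoint {y | 0 < v y} {y | 0 < u y} :=
    Set.disjoint_left.2 fun y (hv : 0 < v y) (hu : 0 < u y) => (lt_min hu hv).ne' (hmin y)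
  refine (hS.subset_or_subset (isOpen_lt continuous_const v.continuous)
    (isOpen_lt continuous_const u.continuous) hdisj hcover).imp (fun h y hy => ?_) fun h y hy => ?_
  · exact hzero (hmin y) (h hy)
  · exact hzero ((min_comm _ _).trans (hmin y)) (h hy)

theorem IsCompact.exists_finset_subset_iUnion_connectedComponentIn {Y : Type*}
    [TopologicalSpace Y] [LocallyConnectedSpace Y] {K U : Set Y} (hK : IsCompact K)
    (hU : IsOpen U) (hKU : K ⊆ U) : ∃ t : Finset Y, K ⊆ ⋃ y ∈ t, connectedComponentIn U y := by
  obtain ⟨t, -, hcover⟩ := hK.elim_nhds_subcover (connectedComponentIn U)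
    fun y hy => hU.connectedComponentIn.mem_nhds (mem_connectedComponentIn (hKU hy))
  exact ⟨t, hcover⟩

section LatticeHomToLocallyConnected

variable {Y F : Type*} [TopologicalSpace Y] [FunLike F C(Cantor, ℝ) C(Y, ℝ)]
  [AddMonoidHomClass F C(Cantor, ℝ) C(Y, ℝ)] {T : F}

theorem exists_eqOn_zero_coord (hT : ∀ f g, T (f ⊔ g) = T f ⊔ T g) (y : Y) (i : ℕ) :
    ∃ b, EqOn (T (clopenIndicator (Cantor.isClopen_coord i b))) 0
      (connectedComponentIn {y | 0 < T 1 y} y) := by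
  rw [Bool.exists_bool, or_comm]
  refine isPreconnected_connectedComponentIn.eqOn_zero_or_eqOn_zero ?_ fun y' hy' => ?_
  · rw [← map_inf_of_map_sup_s11 hT, clopenIndicator_inf_eq_zero _ _ (Cantor.isCompl_coord i).disjoint,
      map_zero]
  · rw [← ContinuousMap.add_apply, ← map_add,
      clopenIndicator_add_eq_one _ _ (Cantor.isCompl_coord i)]
    exact connectedComponentIn_subset {y | 0 < T 1 y} y hy'

theorem exists_norm_eq_one_and_norm_map_lt [CompactSpace Y] [LocallyConnectedSpace Y]
    (hT : ∀ f g, T (f ⊔ g) = T f ⊔ T g) {c : ℝ} (hc : 0 < c) :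
    ∃ f : C(Cantor, ℝ), ‖f‖ = 1 ∧ ‖T f‖ < c := by
  classical
  have hmono := monotone_of_map_sup hT
  have hK : IsCompact {y | c ≤ T 1 y} := (isClosed_le continuous_const (T 1).continuous).isCompact
  obtain ⟨t, hcover⟩ := hK.exists_finset_subset_iUnion_connectedComponentIn
    (isOpen_lt continuous_const (T 1).continuous) fun y (hy : c ≤ T 1 y) => hc.trans_le hy
  choose dead hdead using exists_eqOn_zero_coord hT
  obtain ⟨x, n, hx⟩ := (t.image dead).exists_diagonal_agree
  refine ⟨clopenIndicator (isClopen_cylinder x n),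
    norm_clopenIndicator _ ⟨x, PiNat.self_mem_cylinder x n⟩, ?_⟩
  rw [ContinuousMap.norm_lt_iff _ hc]
  intro y
  have hnonneg : 0 ≤ T (clopenIndicator (isClopen_cylinder x n)) y := by
    simpa using hmono (clopenIndicator_nonneg (isClopen_cylinder x n)) y
  rw [Real.norm_of_nonneg hnonneg]
  by_cases hy : c ≤ T 1 y
  · obtain ⟨p, hpt, hyp⟩ := mem_iUnion₂.1 (hcover hy)
    obtain ⟨i, hin, hxi⟩ := hx (dead p) (Finset.mem_image_of_mem _ hpt)
    calc T (clopenIndicator (isClopen_cylinder x n)) y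
        ≤ T (clopenIndicator (Cantor.isClopen_coord i (dead p i))) y :=
          hmono (clopenIndicator_mono _ _ fun z hz => hxi ▸ hz i hin) y
      _ = 0 := hdead p i hyp
      _ < c := hc
  · exact (hmono (clopenIndicator_le_one _) y).trans_lt (not_le.1 hy)

end LatticeHomToLocallyConnected

instance : LocallyConnectedSpace unitInterval :=
  (isQuotientMap_projIcc (h := zero_le_one)).isCoinducing.locallyConnectedSpace

/-- `C(Δ)` is **not** lattice embeddable into `C[0,1]`: there is no bounded linear
lattice homomorphism `C(Δ) → C[0,1]` which is bounded below. -/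
theorem CDelta_not_lattice_embeds_in_C01 :
    ¬ ∃ T : C(Cantor, ℝ) →L[ℝ] C(unitInterval, ℝ),
      (∀ f g : C(Cantor, ℝ), T (f ⊔ g) = T f ⊔ T g) ∧
      (∃ c : ℝ, 0 < c ∧ ∀ f : C(Cantor, ℝ), c * ‖f‖ ≤ ‖T f‖) := by
  rintro ⟨T, hT, c, hc, hlow⟩
  obtain ⟨f, hf, hTf⟩ := exists_norm_eq_one_and_norm_map_lt hT hc
  exact hTf.not_ge (by simpa [hf] using hlow f)
end

section
/- Let K be a compact Hausdorff space and suppose there is a lattice embedding T : C(K) → C[0,1] of the form (Tf)(t) = u(t)·f(h(t)) for t ∉ u⁻¹(0) and (Tf)(t) = 0 otherwise, where u : [0,1] → [0,∞) is continuous, h : [0,1]∖u⁻¹(0) → K is continuous, and ‖f‖ ≤ C‖Tf‖ for all f ∈ C(K) with C > 0. Then h({t : u(t) ≥ 1/(2C)}) = K. -/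
/-- If a lattice embedding `T : C(K) → C[0,1]` has the form
`(Tf)(t) = u(t)·f(h(t))` off `u⁻¹(0)` and `0` on `u⁻¹(0)`, with
`‖f‖ ≤ C‖Tf‖` for all `f`, then `h({t : u(t) ≥ 1/(2C)}) = K`. -/
theorem image_of_large_u_is_everything
    (K : Type*) [TopologicalSpace K] [CompactSpace K] [T2Space K]
    (u : unitInterval → ℝ) (hu : Continuous u) (hupos : ∀ t, 0 ≤ u t)
    (h : {t : unitInterval // u t ≠ 0} → K) (hh : Continuous h)
    (T : C(K, ℝ) →L[ℝ] C(unitInterval, ℝ))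
    (hTlat : ∀ f g : C(K, ℝ), T (f ⊔ g) = T f ⊔ T g)
    (hTform : ∀ (f : C(K, ℝ)) (t : unitInterval) (ht : u t ≠ 0),
      T f t = u t * f (h ⟨t, ht⟩))
    (hTzero : ∀ (f : C(K, ℝ)) (t : unitInterval), u t = 0 → T f t = 0)
    (C : ℝ) (hC : 0 < C)
    (hlower : ∀ f : C(K, ℝ), ‖f‖ ≤ C * ‖T f‖) :
    ∀ k : K, ∃ (t : unitInterval) (ht : u t ≠ 0),
      1 / (2 * C) ≤ u t ∧ h ⟨t, ht⟩ = k := by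
  intro k
  by_contra hcon
  push_neg at hcon
  have hpos : (0 : ℝ) < 1 / (2 * C) := by positivity
  -- the compact set where u is large
  set A : Set unitInterval := {t | 1 / (2 * C) ≤ u t} with hA
  have hAne : ∀ t ∈ A, u t ≠ 0 := fun t ht => ne_of_gt (lt_of_lt_of_le hpos ht)
  -- the inclusion of A into the domain of h, and its image S
  let g : A → K := fun x => h ⟨x.1, hAne x.1 x.2⟩
  have hg : Continuous g := by
    apply hh.comp
    exact Continuous.subtype_mk continuous_subtype_val _
  have hAcompact : IsCompact A := (isClosed_le continuous_const hu).isCompact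
  have : CompactSpace A := isCompact_iff_compactSpace.mp hAcompact
  have hScompact : IsCompact (Set.range g) := isCompact_range hg
  have hSclosed : IsClosed (Set.range g) := hScompact.isClosed
  have hknot : k ∉ Set.range g := by
    rintro ⟨⟨t, htA⟩, rfl⟩
    exact hcon t (hAne t htA) htA rfl
  -- Urysohn
  obtain ⟨f, hf0, hf1, hf01⟩ := exists_continuous_zero_one_of_isClosed hSclosed
    (isClosed_singleton (x := k)) (Set.disjoint_singleton_right.mpr hknot)
  have hfk : f k = 1 := hf1 rfl
  have hfnorm : ∀ x, ‖f x‖ ≤ 1 := by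
    intro x
    rw [Real.norm_eq_abs, abs_le]
    exact ⟨by linarith [(hf01 x).1], (hf01 x).2⟩
  have hTf : ‖T f‖ ≤ 1 / (2 * C) := by
    apply ContinuousMap.norm_le _ hpos.le |>.mpr
    intro t
    by_cases ht : u t = 0
    · rw [hTzero f t ht, norm_zero]; exact hpos.le
    · rw [hTform f t ht, Real.norm_eq_abs, abs_mul, abs_of_nonneg (hupos t)]
      rcases le_or_gt (1 / (2 * C)) (u t) with hbig | hsmall
      · have : f (h ⟨t, ht⟩) = 0 := hf0 ⟨⟨t, hbig⟩, rfl⟩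
        rw [this, abs_zero, mul_zero]
        exact hpos.le
      · calc u t * |f (h ⟨t, ht⟩)| ≤ u t * 1 :=
              mul_le_mul_of_nonneg_left (hfnorm _) (hupos t)
          _ ≤ 1 / (2 * C) := by rw [mul_one]; exact hsmall.le
  have h1 : (1 : ℝ) ≤ ‖f‖ := by
    have := ContinuousMap.norm_coe_le_norm f k
    rw [hfk] at this
    simpa using this
  have h2 : ‖f‖ ≤ C * (1 / (2 * C)) :=
    le_trans (hlower f) (mul_le_mul_of_nonneg_left hTf hC.le)
  rw [mul_one_div, div_eq_mul_inv, mul_inv, ← mul_assoc] at h2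
  have : C * C⁻¹ = 1 := mul_inv_cancel₀ hC.ne'
  nlinarith [h2, h1]
end

section
/- If K is a compact Hausdorff space such that C(K) is lattice embeddable into C[0,1], then K is a finite disjoint union of Peano compacta (continuous images of [0,1]). Conversely, if K is a finite disjoint union of Peano compacta then C(K) is lattice embeddable into C[0,1]. -/
/-- A subset `A` of a topological space is a Peano compactum if it is the range of a
continuous map from `[0,1]`. -/
def IsPeanoSubset {K : Type*} [TopologicalSpace K] (A : Set K) : Prop :=
  ∃ f : unitInterval → K, Continuous f ∧ Set.range f = A

/-!
At every `t` with `w t > 0`, where `w = T 1`, a lattice embedding `T : C(K) → C[0,1]` is a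
weighted point evaluation `T f t = w t * f (ψ t)`, because lattice homomorphisms `C(K) → ℝ` are
multiples of point evaluations. The map `ψ` is continuous on `{w > 0}`, and the lower bound
`c * ‖f‖ ≤ ‖T f‖` forces `ψ` to map the compact set `{w ≥ c / 2}` onto `K`: a Urysohn function
vanishing on the image would have `‖T f‖ ≤ c / 2`. Covering `{w ≥ c / 2}` by finitely many closed
intervals inside `{w > 0}` writes `K` as a finite union of Peano sets, and merging overlapping
ones (two intersecting Peano sets are joined by concatenating paths) makes the union disjoint.

Conversely, if `K = ⋃ i, g i '' [0,1]`, split `[0,1]` into `n` blocks and let `T f` on block `i`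
be a plateau bump times `f ∘ g i`, reparametrised so that `g i` runs over `[0,1]` along the
plateau. Bumps with disjoint supports make `T` a lattice homomorphism; the plateaus make it an
isometry.
-/

open Set Filter Topology unitInterval

section SupPreserving

variable {E F 𝓕 : Type*} [FunLike 𝓕 E F] {φ : 𝓕}

theorem monotone_of_map_sup_s17 [Lattice E] [SemilatticeSup F]
    (hφ : ∀ f g, φ (f ⊔ g) = φ f ⊔ φ g) : Monotone φ := fun f g hfg =>
  calc φ f ≤ φ f ⊔ φ g := le_sup_left
    _ = φ g := by rw [← hφ, sup_eq_right.mpr hfg]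

variable [Lattice E] [AddCommGroup E] [Lattice F] [AddCommGroup F] [AddMonoidHomClass 𝓕 E F]

theorem map_abs_of_map_sup (hφ : ∀ f g, φ (f ⊔ g) = φ f ⊔ φ g) (f : E) : φ |f| = |φ f| := by
  change φ (f ⊔ -f) = φ f ⊔ -φ f
  rw [hφ, map_neg]

theorem map_inf_of_map_sup_s17 [AddLeftMono E] [AddLeftMono F] (hφ : ∀ f g, φ (f ⊔ g) = φ f ⊔ φ g)
    (f g : E) : φ (f ⊓ g) = φ f ⊓ φ g := by
  rw [← neg_neg (f ⊓ g), neg_inf, map_neg, hφ, map_neg, map_neg, neg_sup, neg_neg, neg_neg]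

end SupPreserving

theorem exists_bump_of_isOpen {K : Type*} [TopologicalSpace K] [CompletelyRegularSpace K]
    {x : K} {W : Set K} (hW : IsOpen W) (hx : x ∈ W) :
    ∃ v : C(K, ℝ), 0 ≤ v ∧ v ≤ 1 ∧ v x = 1 ∧ EqOn v 0 Wᶜ := by
  obtain ⟨f, hf, hfx, hfW⟩ := CompletelyRegularSpace.completely_regular_isOpen x W hW hx
  refine ⟨⟨fun y => 1 - f y, by fun_prop⟩, fun y => ?_, fun y => ?_, ?_, fun y hy => ?_⟩
  · simpa using (f y).2.2
  · simpa using (f y).2.1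
  · simp [hfx]
  · simp [hfW hy]

section PointEvaluation

variable {K 𝓕 : Type*} [TopologicalSpace K] [FunLike 𝓕 C(K, ℝ) ℝ] [LinearMapClass 𝓕 ℝ C(K, ℝ) ℝ]
  {φ : 𝓕} (hφ : ∀ f g, φ (f ⊔ g) = φ f ⊔ φ g)
include hφ

theorem abs_map_le_norm_mul_map_one [CompactSpace K] (f : C(K, ℝ)) : |φ f| ≤ ‖f‖ * φ 1 := by
  rw [← map_abs_of_map_sup hφ, ← smul_eq_mul, ← map_smul]
  exact monotone_of_map_sup_s17 hφ fun x => by simpa using f.norm_coe_le_norm x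

theorem exists_forall_apply_eq_zero_of_map_eq_zero [CompactSpace K] (h1 : 0 < φ 1) :
    ∃ x₀, ∀ f : C(K, ℝ), 0 ≤ f → φ f = 0 → f x₀ = 0 := by
  by_contra! h
  choose F hF0 hFφ hFx using h
  obtain ⟨s, hs⟩ := isCompact_univ.elim_finite_subcover (fun x => {y | 0 < F x y})
    (fun x => isOpen_lt continuous_const (F x).continuous)
    (fun y _ => mem_iUnion.mpr ⟨y, (hF0 y y).lt_of_ne' (hFx y)⟩)
  set g := ∑ x ∈ s, F x
  have hg_pos : ∀ y ∈ univ, 0 < g y := fun y _ => by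
    obtain ⟨x, hx, hxy⟩ := mem_iUnion₂.mp (hs (mem_univ y))
    simpa [g] using Finset.sum_pos' (fun i _ => hF0 i y) ⟨x, hx, hxy⟩
  have hφg : φ g = 0 := by simp [g, map_sum, hFφ]
  obtain ⟨ε, hε, hεg⟩ := isCompact_univ.exists_forall_le' g.continuous.continuousOn hg_pos
  have : ε * φ 1 ≤ φ g := by
    rw [← smul_eq_mul, ← map_smul]
    exact monotone_of_map_sup_s17 hφ fun y => by simpa using hεg y (mem_univ y)
  linarith [mul_pos hε h1]

section

variable {x₀ : K} (hx₀ : ∀ f : C(K, ℝ), 0 ≤ f → φ f = 0 → f x₀ = 0)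
include hx₀

theorem map_eq_zero_of_eventuallyEq_zero [CompletelyRegularSpace K] {u : C(K, ℝ)} (hu : 0 ≤ u)
    (hux : u =ᶠ[𝓝 x₀] 0) : φ u = 0 := by
  obtain ⟨V, hVu, hV, hxV⟩ := mem_nhds_iff.mp hux
  obtain ⟨v, hv0, -, hvx, hvV⟩ := exists_bump_of_isOpen hV hxV
  have huv : u ⊓ v = 0 := ContinuousMap.ext fun y => by
    by_cases hy : y ∈ V
    · simpa [show u y = 0 from hVu hy] using hv0 y
    · simpa [hvV hy] using hu y
  have hφuv := congrArg φ huv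
  rw [map_inf_of_map_sup_s17 hφ, map_zero] at hφuv
  rcases le_total (φ u) (φ v) with h | h
  · rwa [inf_eq_left.mpr h] at hφuv
  · rw [inf_eq_right.mpr h] at hφuv
    simpa [hvx] using hx₀ v hv0 hφuv

theorem map_eq_zero_of_apply_eq_zero [CompletelyRegularSpace K] {h : C(K, ℝ)} (hh : 0 ≤ h)
    (hx : h x₀ = 0) : φ h = 0 := by
  have hmono := monotone_of_map_sup_s17 hφ
  have h_le : ∀ ε > 0, φ h ≤ ε * φ 1 := by
    intro ε hε
    set u := (h - ε • 1) ⊔ 0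
    have hu : φ u = 0 := map_eq_zero_of_eventuallyEq_zero hφ hx₀ le_sup_right <| by
      filter_upwards [h.continuous.continuousAt.eventually (gt_mem_nhds (hx ▸ hε))] with y hy
      simpa [u] using hy.le
    have hhu : h ≤ u + ε • 1 := ContinuousMap.le_def.mpr fun y => by
      simp only [u, ContinuousMap.add_apply, ContinuousMap.sup_apply, ContinuousMap.sub_apply,
        ContinuousMap.smul_apply, ContinuousMap.one_apply, ContinuousMap.zero_apply, smul_eq_mul,
        mul_one]
      linarith [le_max_left (h y - ε) 0]
    simpa [hu] using hmono hhu
  refine le_antisymm ?_ (by simpa using hmono hh)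
  exact ge_of_tendsto (((continuous_id.mul continuous_const).tendsto' 0 0 (by simp)).mono_left
    nhdsWithin_le_nhds) (eventually_nhdsWithin_of_forall (s := Ioi 0) fun ε hε => h_le ε hε)

end

theorem exists_map_eq_mul_apply [CompactSpace K] [CompletelyRegularSpace K] (h1 : 0 < φ 1) :
    ∃ x, ∀ f : C(K, ℝ), φ f = φ 1 * f x := by
  obtain ⟨x₀, hx₀⟩ := exists_forall_apply_eq_zero_of_map_eq_zero hφ h1
  refine ⟨x₀, fun f => ?_⟩
  have hg := map_eq_zero_of_apply_eq_zero hφ hx₀ (abs_nonneg (f - f x₀ • 1)) (by simp)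
  rw [map_abs_of_map_sup hφ, abs_eq_zero, map_sub, map_smul, sub_eq_zero, smul_eq_mul] at hg
  rw [hg, mul_comm]

end PointEvaluation

theorem continuousOn_of_forall_continuousOn_comp {X K : Type*} [TopologicalSpace X]
    [TopologicalSpace K] [CompletelyRegularSpace K] {ψ : X → K} {U : Set X}
    (h : ∀ v : C(K, ℝ), ContinuousOn (v ∘ ψ) U) : ContinuousOn ψ U := by
  intro t ht
  refine (nhds_basis_opens (ψ t)).tendsto_right_iff.mpr fun W ⟨hψW, hW⟩ => ?_
  obtain ⟨v, -, -, hv1, hv0⟩ := exists_bump_of_isOpen hW hψW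
  filter_upwards [(h v t ht).eventually (lt_mem_nhds (show (0 : ℝ) < (v ∘ ψ) t by simp [hv1]))]
    with s hs
  by_contra hsW
  simp [hv0 hsW] at hs

section LatticeEmbedding

variable {X K : Type*} [TopologicalSpace X] [TopologicalSpace K] {T : C(K, ℝ) →L[ℝ] C(X, ℝ)}
  (hT : ∀ f g, T (f ⊔ g) = T f ⊔ T g)
include hT

theorem map_sup_evalCLM_comp (t : X) (f g : C(K, ℝ)) :
    (ContinuousMap.evalCLM ℝ t ∘L T) (f ⊔ g) = (ContinuousMap.evalCLM ℝ t ∘L T) f ⊔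
      (ContinuousMap.evalCLM ℝ t ∘L T) g := by
  simp [hT]

theorem exists_continuousOn_eq_mul_comp [CompactSpace K] [CompletelyRegularSpace K] [Nonempty K] :
    ∃ ψ : X → K, ContinuousOn ψ {t | 0 < T 1 t} ∧
      ∀ t, 0 < T 1 t → ∀ f, T f t = T 1 t * f (ψ t) := by
  have : ∀ t, ∃ x, 0 < T 1 t → ∀ f, T f t = T 1 t * f x := fun t => by
    by_cases ht : 0 < T 1 t
    · obtain ⟨x, hx⟩ := exists_map_eq_mul_apply (map_sup_evalCLM_comp hT t) ht
      exact ⟨x, fun _ => hx⟩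
    · exact ⟨Classical.arbitrary K, fun h => absurd h ht⟩
  choose ψ hψ using this
  refine ⟨ψ, continuousOn_of_forall_continuousOn_comp fun v => ?_, hψ⟩
  -- on `{T 1 > 0}`, `v ∘ ψ = T v / T 1`
  refine ((T v).continuous.continuousOn.div (T 1).continuous.continuousOn
    fun t ht => ht.ne').congr fun t ht => ?_
  simpa [hψ t ht v] using (mul_div_cancel_left₀ _ (ne_of_gt (show 0 < T 1 t from ht))).symm

theorem image_superlevelSet_eq_univ [CompactSpace X] [CompactSpace K] [T2Space K] {c : ℝ}
    (hc : 0 < c) (hlow : ∀ f, c * ‖f‖ ≤ ‖T f‖) {ψ : X → K} (hψc : ContinuousOn ψ {t | 0 < T 1 t})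
    (hψ : ∀ t, 0 < T 1 t → ∀ f, T f t = T 1 t * f (ψ t)) : ψ '' {t | c / 2 ≤ T 1 t} = univ := by
  set F := {t | c / 2 ≤ T 1 t}
  have hFU : F ⊆ {t | 0 < T 1 t} := fun t ht => (half_pos hc).trans_le ht
  have hE : IsClosed (ψ '' F) := ((isClosed_le continuous_const (T 1).continuous).isCompact
    |>.image_of_continuousOn (hψc.mono hFU)).isClosed
  refine eq_univ_of_forall fun x => by_contra fun hx => ?_
  obtain ⟨f, hf0, hf1, hfx, hfE⟩ := exists_bump_of_isOpen hE.isOpen_compl hx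
  have hnorm : ‖f‖ = 1 := by
    refine le_antisymm ((ContinuousMap.norm_le _ zero_le_one).mpr fun y => ?_) ?_
    · rw [Real.norm_of_nonneg (ContinuousMap.le_def.mp hf0 y)]
      simpa using ContinuousMap.le_def.mp hf1 y
    · simpa [hfx] using f.norm_coe_le_norm x
  have : ‖T f‖ ≤ c / 2 := (ContinuousMap.norm_le _ (by positivity)).mpr fun t => by
    by_cases ht : t ∈ F
    · rw [hψ t (hFU ht), hfE (not_not.mpr ⟨t, ht, rfl⟩)]
      simpa using (half_pos hc).le
    · calc ‖T f t‖ ≤ ‖f‖ * T 1 t := by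
            simpa using abs_map_le_norm_mul_map_one (map_sup_evalCLM_comp hT t) f
        _ ≤ c / 2 := by rw [hnorm, one_mul]; exact (not_le.mp ht).le
  linarith [hnorm ▸ hlow f]

end LatticeEmbedding

instance unitInterval.instPathConnectedSpace : PathConnectedSpace I :=
  isPathConnected_iff_pathConnectedSpace.mp
    ((convex_Icc 0 1).isPathConnected (nonempty_Icc.mpr zero_le_one))

section Peano

variable {K : Type*} [TopologicalSpace K] {A B : Set K}

theorem IsPeanoSubset.exists_path_range_eq (hA : IsPeanoSubset A) {p : K} (hp : p ∈ A) :
    ∃ q, ∃ γ : Path p q, range γ = A := by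
  obtain ⟨f, hf, rfl⟩ := hA
  obtain ⟨s, rfl⟩ := hp
  let γf : Path (f 0) (f 1) := ⟨⟨f, hf⟩, rfl, rfl⟩
  refine ⟨f 1, ((PathConnectedSpace.somePath s 0).map hf).trans γf, ?_⟩
  rw [Path.trans_range, Path.map_coe]
  exact union_eq_right.mpr (range_comp_subset_range _ f)

theorem IsPeanoSubset.union (hA : IsPeanoSubset A) (hB : IsPeanoSubset B)
    (hAB : ¬Disjoint A B) : IsPeanoSubset (A ∪ B) := by
  obtain ⟨p, hpA, hpB⟩ := not_disjoint_iff.mp hAB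
  obtain ⟨q, γ, hγ⟩ := hA.exists_path_range_eq hpA
  obtain ⟨r, δ, hδ⟩ := hB.exists_path_range_eq hpB
  exact ⟨γ.symm.trans δ, (γ.symm.trans δ).continuous,
    by rw [Path.trans_range, Path.symm_range, hγ, hδ]⟩

theorem isPeanoSubset_image_Icc {ψ : I → K} {a b : I} (hab : a ≤ b)
    (hψ : ContinuousOn ψ (Icc a b)) : IsPeanoSubset (ψ '' Icc a b) :=
  ⟨ψ ∘ Subtype.val ∘ projIcc a b hab,
    hψ.comp_continuous (continuous_subtype_val.comp continuous_projIcc)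
      fun t => (projIcc a b hab t).2,
    by rw [range_comp, range_comp, range_projIcc, image_univ, Subtype.range_coe]⟩

theorem exists_fin_pairwise_disjoint_isPeanoSubset (s : Finset (Set K))
    (hs : ∀ A ∈ s, IsPeanoSubset A) :
    ∃ (n : ℕ) (A : Fin n → Set K), ⋃ i, A i = ⋃₀ (s : Set (Set K)) ∧
      (∀ i j, i ≠ j → Disjoint (A i) (A j)) ∧ ∀ i, IsPeanoSubset (A i) := by
  classical
  induction hm : s.card using Nat.strong_induction_on generalizing s with
  | _ m ih =>
  by_cases H : ∃ A ∈ s, ∃ B ∈ s, A ≠ B ∧ ¬Disjoint A B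
  · obtain ⟨A, hA, B, hB, hAB, hnd⟩ := H
    set s' := insert (A ∪ B) ((s.erase A).erase B)
    have hB' : B ∈ s.erase A := Finset.mem_erase.mpr ⟨hAB.symm, hB⟩
    have hcard : s'.card < m := by
      have h₁ : s'.card ≤ ((s.erase A).erase B).card + 1 := Finset.card_insert_le _ _
      have h₂ : 0 < (s.erase A).card := Finset.card_pos.mpr ⟨B, hB'⟩
      rw [Finset.card_erase_of_mem hB', Finset.card_erase_of_mem hA] at h₁
      rw [Finset.card_erase_of_mem hA] at h₂
      omega
    have hs' : ∀ C ∈ s', IsPeanoSubset C := by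
      simp only [s', Finset.mem_insert, Finset.mem_erase]
      rintro C (rfl | ⟨-, -, hC⟩)
      exacts [(hs A hA).union (hs B hB) hnd, hs C hC]
    have hunion : ⋃₀ (s' : Set (Set K)) = ⋃₀ (s : Set (Set K)) := by
      conv_rhs => rw [← Finset.insert_erase hA, ← Finset.insert_erase hB']
      simp only [s', Finset.coe_insert, sUnion_insert, union_assoc]
    obtain ⟨n, C, hC, hdisj, hP⟩ := ih _ hcard s' hs' rfl
    exact ⟨n, C, hC.trans hunion, hdisj, hP⟩
  · push Not at H
    let e := s.equivFin.symm
    refine ⟨s.card, fun i => e i, ?_, fun i j hij => H _ (e i).2 _ (e j).2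
      fun h => hij (e.injective (Subtype.ext h)), fun i => hs _ (e i).2⟩
    rw [e.surjective.iUnion_comp (fun C : s => (C : Set K)), sUnion_eq_iUnion]
    rfl

end Peano

theorem IsCompact.exists_finset_Icc_cover {α : Type*} [LinearOrder α] [TopologicalSpace α]
    [OrderTopology α] {F U : Set α} (hF : IsCompact F) (hU : IsOpen U) (hFU : F ⊆ U) :
    ∃ s : Finset (α × α), (∀ p ∈ s, p.1 ≤ p.2 ∧ Icc p.1 p.2 ⊆ U) ∧
      F ⊆ ⋃ p ∈ s, Icc p.1 p.2 := by
  classical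
  have : ∀ t ∈ F, ∃ p : α × α, (p.1 ≤ p.2 ∧ Icc p.1 p.2 ⊆ U) ∧ Icc p.1 p.2 ∈ 𝓝 t := fun t ht =>
    let ⟨a, b, hab, hnhds, hsub⟩ := exists_Icc_mem_subset_of_mem_nhds (hU.mem_nhds (hFU ht))
    ⟨(a, b), ⟨hab.1.trans hab.2, hsub⟩, hnhds⟩
  choose p hp using this
  obtain ⟨t, ht⟩ := hF.elim_nhds_subcover' (fun x hx => Icc (p x hx).1 (p x hx).2)
    fun x hx => (hp x hx).2
  refine ⟨t.image fun x => p x.1 x.2, ?_, ?_⟩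
  · simp only [Finset.mem_image]
    rintro _ ⟨x, -, rfl⟩
    exact (hp x.1 x.2).1
  · intro y hy
    obtain ⟨x, hx, hyx⟩ := mem_iUnion₂.mp (ht hy)
    exact mem_iUnion₂.mpr ⟨_, Finset.mem_image_of_mem _ hx, hyx⟩

theorem exists_finset_isPeanoSubset_cover {K : Type*} [TopologicalSpace K] [CompactSpace K]
    [T2Space K] {T : C(K, ℝ) →L[ℝ] C(I, ℝ)} (hT : ∀ f g, T (f ⊔ g) = T f ⊔ T g) {c : ℝ}
    (hc : 0 < c) (hlow : ∀ f, c * ‖f‖ ≤ ‖T f‖) :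
    ∃ s : Finset (Set K), (∀ A ∈ s, IsPeanoSubset A) ∧ ⋃₀ (s : Set (Set K)) = univ := by
  rcases isEmpty_or_nonempty K with hK | hK
  · exact ⟨∅, by simp, by simp [eq_empty_of_isEmpty]⟩
  obtain ⟨ψ, hψc, hψ⟩ := exists_continuousOn_eq_mul_comp hT
  obtain ⟨s, hs, hcover⟩ := (isClosed_le continuous_const (T 1).continuous).isCompact
    |>.exists_finset_Icc_cover (isOpen_lt continuous_const (T 1).continuous)
      fun t (ht : c / 2 ≤ T 1 t) => (half_pos hc).trans_le ht
  refine ⟨s.image fun p => ψ '' Icc p.1 p.2, ?_, eq_univ_of_forall fun x => ?_⟩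
  · simp only [Finset.mem_image]
    rintro _ ⟨p, hp, rfl⟩
    exact isPeanoSubset_image_Icc (hs p hp).1 (hψc.mono (hs p hp).2)
  · obtain ⟨t, ht, rfl⟩ := (image_superlevelSet_eq_univ hT hc hlow hψc hψ).symm ▸ mem_univ x
    obtain ⟨p, hp, htp⟩ := mem_iUnion₂.mp (hcover ht)
    exact ⟨_, Finset.mem_image_of_mem _ hp, t, htp, rfl⟩

theorem exists_latticeEmbedding_of_disjoint_weights {X K ι : Type*} [TopologicalSpace X]
    [CompactSpace X] [TopologicalSpace K] [CompactSpace K] [Fintype ι] (h : ι → C(X, ℝ))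
    (G : ι → C(X, K)) (h_nonneg : ∀ i t, 0 ≤ h i t)
    (h_disj : ∀ t i j, i ≠ j → h i t = 0 ∨ h j t = 0) (hG : ∀ x, ∃ i t, h i t = 1 ∧ G i t = x) :
    ∃ T : C(K, ℝ) →L[ℝ] C(X, ℝ), (∀ f g, T (f ⊔ g) = T f ⊔ T g) ∧ ∀ f, ‖f‖ ≤ ‖T f‖ := by
  let T := ∑ i, (ContinuousLinearMap.mul ℝ C(X, ℝ) (h i)).comp (ContinuousMap.compCLM ℝ ℝ (G i))
  have hT : ∀ f t, T f t = ∑ i, h i t * f (G i t) := fun f t => by simp [T]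
  have hT_single : ∀ f t i, h i t ≠ 0 → T f t = h i t * f (G i t) := fun f t i hi => by
    rw [hT, Finset.sum_eq_single i (fun j _ hji => ?_) (by simp)]
    rw [(h_disj t j i hji).resolve_right hi, zero_mul]
  refine ⟨T, fun f g => ContinuousMap.ext fun t => ?_, fun f => ?_⟩
  · by_cases H : ∃ i, h i t ≠ 0
    · obtain ⟨i, hi⟩ := H
      simp only [ContinuousMap.sup_apply, hT_single _ t i hi]
      exact mul_max_of_nonneg _ _ (h_nonneg i t)
    · push Not at H
      simp [hT, H]
  · refine (ContinuousMap.norm_le _ (norm_nonneg _)).mpr fun x => ?_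
    obtain ⟨i, t, hit, rfl⟩ := hG x
    calc ‖f (G i t)‖ = ‖T f t‖ := by rw [hT_single f t i (by simp [hit]), hit, one_mul]
      _ ≤ ‖T f‖ := (T f).norm_coe_le_norm t

theorem exists_unitInterval_blocks (n : ℕ) :
    ∃ (h : Fin n → C(I, ℝ)) (G : Fin n → C(I, I)), (∀ i t, 0 ≤ h i t) ∧
      (∀ t i j, i ≠ j → h i t = 0 ∨ h j t = 0) ∧ ∀ i s, ∃ t, h i t = 1 ∧ G i t = s := by
  -- block `i` is where `u i t ∈ [0, 1]`; on its middle third `h i = 1` and `G i` runs over `I`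
  let u (i : Fin n) (t : I) : ℝ := n * t - i
  let h (i : Fin n) : C(I, ℝ) :=
    ⟨fun t => projIcc 0 1 zero_le_one (min (3 * u i t) (3 - 3 * u i t)), by fun_prop⟩
  let G (i : Fin n) : C(I, I) := ⟨fun t => projIcc 0 1 zero_le_one (3 * u i t - 1), by fun_prop⟩
  have h_apply : ∀ i t, h i t = projIcc 0 1 zero_le_one (min (3 * u i t) (3 - 3 * u i t)) :=
    fun _ _ => rfl
  have h_pos : ∀ i t, h i t ≠ 0 → 0 < u i t ∧ u i t < 1 := fun i t hit => by
    by_contra! H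
    have hmin : min (3 * u i t) (3 - 3 * u i t) ≤ 0 := by
      by_cases h0 : 0 < u i t
      · exact (min_le_right _ _).trans (by linarith [H h0])
      · exact (min_le_left _ _).trans (by linarith)
    exact hit (by rw [h_apply, projIcc_of_le_left _ hmin])
  refine ⟨h, G, fun i t => (h_apply i t) ▸ (projIcc _ _ zero_le_one _).2.1,
    fun t i j hij => ?_, fun i s => ?_⟩
  · by_contra! H
    obtain ⟨hi0, hi1⟩ := h_pos i t H.1
    obtain ⟨hj0, hj1⟩ := h_pos j t H.2
    simp only [u] at hi0 hi1 hj0 hj1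
    have hij₁ : (i : ℕ) < j + 1 := by exact_mod_cast (by linarith : (i : ℝ) < j + 1)
    have hji₁ : (j : ℕ) < i + 1 := by exact_mod_cast (by linarith : (j : ℝ) < i + 1)
    exact hij (Fin.ext (by omega))
  · have hn : (0 : ℝ) < n := Nat.cast_pos.mpr i.pos
    have hi : (i : ℝ) + 1 ≤ n := by exact_mod_cast i.2
    let t : I := ⟨(i + (1 + s) / 3) / n, div_nonneg (by linarith [s.2.1]) hn.le,
      (div_le_one hn).mpr (by linarith [s.2.2])⟩
    have hu : u i t = (1 + s) / 3 := by
      simp only [u, t]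
      field_simp
      ring
    refine ⟨t, ?_, ?_⟩
    · have : 1 ≤ min (3 * u i t) (3 - 3 * u i t) := by
        rw [hu]; exact le_min (by linarith [s.2.1]) (by linarith [s.2.2])
      rw [h_apply, projIcc_of_right_le _ this]
    · have : 3 * u i t - 1 = s := by rw [hu]; ring
      change projIcc 0 1 zero_le_one (3 * u i t - 1) = s
      rw [this, projIcc_val]

theorem exists_latticeEmbedding_of_isPeanoSubset_cover {K : Type*} [TopologicalSpace K]
    [CompactSpace K] {n : ℕ} {A : Fin n → Set K} (hcov : univ = ⋃ i, A i)
    (hA : ∀ i, IsPeanoSubset (A i)) :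
    ∃ T : C(K, ℝ) →L[ℝ] C(I, ℝ), (∀ f g, T (f ⊔ g) = T f ⊔ T g) ∧ ∀ f, ‖f‖ ≤ ‖T f‖ := by
  choose g hg hrange using hA
  obtain ⟨h, G, h_nonneg, h_disj, hG⟩ := exists_unitInterval_blocks n
  refine exists_latticeEmbedding_of_disjoint_weights h (fun i => (⟨g i, hg i⟩ : C(I, K)).comp (G i))
    h_nonneg h_disj fun x => ?_
  obtain ⟨i, hi⟩ := mem_iUnion.mp (hcov ▸ mem_univ x)
  rw [← hrange i] at hi
  obtain ⟨s, rfl⟩ := hi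
  obtain ⟨t, ht, hts⟩ := hG i s
  exact ⟨i, t, ht, by simp [hts]⟩

/-- For a compact Hausdorff space `K`, `C(K)` is lattice embeddable into `C[0,1]` if
and only if `K` is a finite disjoint union of Peano compacta. -/
theorem CK_lattice_embeds_iff_finite_union_of_Peano
    (K : Type) [TopologicalSpace K] [CompactSpace K] [T2Space K] :
    (∃ T : C(K, ℝ) →L[ℝ] C(unitInterval, ℝ),
      (∀ f g : C(K, ℝ), T (f ⊔ g) = T f ⊔ T g) ∧
      (∃ c : ℝ, 0 < c ∧ ∀ f : C(K, ℝ), c * ‖f‖ ≤ ‖T f‖)) ↔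
    (∃ (n : ℕ) (A : Fin n → Set K),
      (Set.univ = ⋃ i, A i) ∧
      (∀ i j, i ≠ j → Disjoint (A i) (A j)) ∧
      (∀ i, IsPeanoSubset (A i))) := by
  constructor
  · rintro ⟨T, hT, c, hc, hlow⟩
    obtain ⟨s, hs, hcov⟩ := exists_finset_isPeanoSubset_cover hT hc hlow
    obtain ⟨n, A, hA, hdisj, hP⟩ := exists_fin_pairwise_disjoint_isPeanoSubset s hs
    exact ⟨n, A, by rw [hA, hcov], hdisj, hP⟩
  · rintro ⟨n, A, hcov, -, hP⟩
    obtain ⟨T, hT, hlow⟩ := exists_latticeEmbedding_of_isPeanoSubset_cover hcov hP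
    exact ⟨T, hT, 1, one_pos, by simpa using hlow⟩
end
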